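/- arXiv:1704.06806 — 3 statements merged into one kernel-verified Lean document; each statement's English description precedes it below -/
import Mathlib

section
/- Let M(a), M(b) be invertible n×n real matrices built from frames of V(a),W(a) and V(b),W(b) respectively. If one replaces the frames by any other frames of the same subspaces, obtaining matrices M̂(a)=M(a)G(a) and M̂(b)=M(b)G(b) with G(a),G(b) block-diagonal invertible matrices varying continuously along a path G(t) of invertible matrices on [a,b], then sign(det(M̂(a)·M̂(b))) = sign(det(M(a)·M(b))). Hence the Z₂-index of a pair of paths of subspaces is independent of the choice of continuous frames. -/
/- A continuous path of invertible matrices cannot change the sign of its determinant, since by the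
intermediate value theorem the determinant would otherwise vanish somewhere. Changing frames
multiplies `det (M a) * det (M b)` by `det (G a) * det (G b)`, which is therefore positive. -/

open Matrix

/-- The `ℤ₂`-index associated to the endpoint frame matrices `Ma`, `Mb`:
`0` if `det (Ma) * det (Mb) > 0` and `1` if `det (Ma) * det (Mb) < 0`. -/
noncomputable def z2Index {ι : Type} [Fintype ι] [DecidableEq ι]
    (Ma Mb : Matrix ι ι ℝ) : ZMod 2 :=
  if 0 < Ma.det * Mb.det then 0 else 1

theorem IsPreconnected.mul_pos_of_ne_zero {X 𝕜 : Type*} [TopologicalSpace X] [Ring 𝕜]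
    [LinearOrder 𝕜] [IsStrictOrderedRing 𝕜] [TopologicalSpace 𝕜] [OrderTopology 𝕜]
    {s : Set X} (hs : IsPreconnected s) {f : X → 𝕜} (hf : ContinuousOn f s)
    (hf₀ : ∀ x ∈ s, f x ≠ 0) {x y : X} (hx : x ∈ s) (hy : y ∈ s) : 0 < f x * f y := by
  by_contra! hle
  obtain ⟨z, hz, hfz⟩ : ∃ z ∈ s, f z = 0 := by
    rcases mul_nonpos_iff.1 hle with ⟨hfx, hfy⟩ | ⟨hfx, hfy⟩
    · exact hs.intermediate_value hy hx hf ⟨hfy, hfx⟩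
    · exact hs.intermediate_value hx hy hf ⟨hfx, hfy⟩
  exact hf₀ z hz hfz

theorem IsPreconnected.det_mul_det_pos {X n : Type*} [TopologicalSpace X] [Fintype n]
    [DecidableEq n] {s : Set X} (hs : IsPreconnected s) {G : X → Matrix n n ℝ}
    (hG : ContinuousOn G s) (hG₀ : ∀ x ∈ s, IsUnit (G x).det) {x y : X} (hx : x ∈ s)
    (hy : y ∈ s) : 0 < (G x).det * (G y).det :=
  hs.mul_pos_of_ne_zero ((continuous_id.matrix_det).comp_continuousOn hG)
    (fun z hz => (hG₀ z hz).ne_zero) hx hy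

theorem Real.sign_mul_of_pos {x c : ℝ} (hc : 0 < c) : Real.sign (x * c) = Real.sign x := by
  rcases lt_trichotomy x 0 with hx | rfl | hx
  · rw [sign_of_neg hx, sign_of_neg (mul_neg_of_neg_of_pos hx hc)]
  · rw [zero_mul]
  · rw [sign_of_pos hx, sign_of_pos (mul_pos hx hc)]

section FrameChange

variable {ι : Type} [Fintype ι] [DecidableEq ι] {A B G H : Matrix ι ι ℝ}

theorem Matrix.det_mul_mul_mul (A B G H : Matrix ι ι ℝ) :
    (A * G * (B * H)).det = (A * B).det * (G.det * H.det) := by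
  simp only [det_mul]
  ring

theorem Real.sign_det_mul_mul_mul (h : 0 < G.det * H.det) :
    Real.sign (A * G * (B * H)).det = Real.sign (A * B).det := by
  rw [det_mul_mul_mul, Real.sign_mul_of_pos h]

theorem z2Index_mul_mul (h : 0 < G.det * H.det) : z2Index (A * G) (B * H) = z2Index A B := by
  have hdet : (A * G).det * (B * H).det = A.det * B.det * (G.det * H.det) := by
    rw [← det_mul, det_mul_mul_mul, det_mul]
  simp only [z2Index, hdet, mul_pos_iff_of_pos_right h]

end FrameChange

theorem z2Index_wellDefined_general
    (k m : ℕ) (a b : ℝ) (hab : a ≤ b)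
    (M : ℝ → Matrix (Fin k ⊕ Fin m) (Fin k ⊕ Fin m) ℝ)
    (G : ℝ → Matrix (Fin k ⊕ Fin m) (Fin k ⊕ Fin m) ℝ)
    (hG : ContinuousOn G (Set.Icc a b))
    (hGinv : ∀ t ∈ Set.Icc a b, IsUnit (G t).det)
    (Mhat : ℝ → Matrix (Fin k ⊕ Fin m) (Fin k ⊕ Fin m) ℝ)
    (hhata : Mhat a = M a * G a) (hhatb : Mhat b = M b * G b) :
    Real.sign (Mhat a * Mhat b).det = Real.sign (M a * M b).det ∧
      z2Index (Mhat a) (Mhat b) = z2Index (M a) (M b) := by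
  have hpos : 0 < (G a).det * (G b).det :=
    isPreconnected_Icc.det_mul_det_pos hG hGinv (Set.left_mem_Icc.2 hab)
      (Set.right_mem_Icc.2 hab)
  rw [hhata, hhatb]
  exact ⟨Real.sign_det_mul_mul_mul hpos, z2Index_mul_mul hpos⟩

/-- replacing the frames of `V(a), W(a)` and `V(b), W(b)` changes the
endpoint frame matrices `M a`, `M b` into `M a * G a`, `M b * G b` where `G a`, `G b`
are block-diagonal invertible matrices lying on a continuous path `G` of invertible
matrices on `[a,b]`.  Then the sign of `det (M̂ a * M̂ b)` equals that of
`det (M a * M b)`; hence the `ℤ₂`-index is independent of the choice of frames. -/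
theorem z2Index_wellDefined
    (k m : ℕ) (a b : ℝ) (hab : a ≤ b)
    (M : ℝ → Matrix (Fin k ⊕ Fin m) (Fin k ⊕ Fin m) ℝ)
    (hMa : IsUnit (M a).det) (hMb : IsUnit (M b).det)
    (G : ℝ → Matrix (Fin k ⊕ Fin m) (Fin k ⊕ Fin m) ℝ)
    (hG : ContinuousOn G (Set.Icc a b))
    (hGinv : ∀ t ∈ Set.Icc a b, IsUnit (G t).det)
    (hGa : ∃ (G₁ : Matrix (Fin k) (Fin k) ℝ) (G₂ : Matrix (Fin m) (Fin m) ℝ),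
      IsUnit G₁.det ∧ IsUnit G₂.det ∧ G a = Matrix.fromBlocks G₁ 0 0 G₂)
    (hGb : ∃ (G₁ : Matrix (Fin k) (Fin k) ℝ) (G₂ : Matrix (Fin m) (Fin m) ℝ),
      IsUnit G₁.det ∧ IsUnit G₂.det ∧ G b = Matrix.fromBlocks G₁ 0 0 G₂)
    (Mhat : ℝ → Matrix (Fin k ⊕ Fin m) (Fin k ⊕ Fin m) ℝ)
    (hhata : Mhat a = M a * G a) (hhatb : Mhat b = M b * G b) :
    Real.sign (Mhat a * Mhat b).det = Real.sign (M a * M b).det ∧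
      z2Index (Mhat a) (Mhat b) = z2Index (M a) (M b) :=
  z2Index_wellDefined_general k m a b hab M G hG hGinv Mhat hhata hhatb
end

section
/- Sum additivity of the Z₂-index: for pairs (V₁,W₁) of continuous paths of subspaces in ℝ^{n₁} and (V₂,W₂) in ℝ^{n₂}, each with transversal endpoints, the Z₂-index of the direct sum satisfies ι(V₁⊕V₂, W₁⊕W₂;[a,b]) ≡ ι(V₁,W₁;[a,b]) + ι(V₂,W₂;[a,b]) (mod 2). -/
open Matrix

/-- The `i`-th column of a matrix. -/
def Matrix.col' {ι : Type} (M : Matrix ι ι ℝ) (i : ι) : ι → ℝ := fun j => M j i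

/-- `M` is a continuous path of frame matrices for the pair of paths of subspaces
`(V, W)` on the parameter set `s`: the columns of `M t` indexed by `c` span `V t`
and the remaining columns span `W t`. -/
def IsFramePath {ι : Type} [Fintype ι] [DecidableEq ι] (c : Set ι)
    (V W : ℝ → Submodule ℝ (ι → ℝ)) (M : ℝ → Matrix ι ι ℝ) (s : Set ℝ) : Prop :=
  ContinuousOn M s ∧
    (∀ t ∈ s, V t = Submodule.span ℝ ((M t).col' '' c)) ∧
    (∀ t ∈ s, W t = Submodule.span ℝ ((M t).col' '' cᶜ))

/-!
The block-diagonal frame `fromBlocks (M₁ t) 0 0 (M₂ t)` of the direct-sum paths has determinant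
`det M₁(t) · det M₂(t)`, so its index is the sum of the two indices; what has to be shown is that
the index does not depend on the choice of frame.
If `M` and `N` are frames of the same pair `(V, W)`, then `N = M G` with `G` block diagonal for the
splitting of the columns, and `blockDiagPart (Mᵀ N) = blockDiagPart (Mᵀ M) · G`. This gives
`det N · det (blockDiagPart (Mᵀ M)) = det M · det (blockDiagPart (Mᵀ N))`, where both block
determinants depend continuously on `t` and never vanish (the first is a product of Gram
determinants of independent columns). By the intermediate value theorem they have the same sign at
`a` and at `b`, hence so do `det M(a) det M(b)` and `det N(a) det N(b)`.
-/

open Set Submodule Module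

theorem mul_pos_of_continuousOn_of_ne_zero {f : ℝ → ℝ} {a b : ℝ} (hab : a ≤ b)
    (hf : ContinuousOn f (Icc a b)) (h0 : ∀ t ∈ Icc a b, f t ≠ 0) : 0 < f a * f b := by
  by_contra! hneg
  obtain ⟨t, ht, hft⟩ : ∃ t ∈ Icc a b, f t = 0 := by
    rcases mul_nonpos_iff.mp hneg with ⟨ha, hb⟩ | ⟨ha, hb⟩
    · exact intermediate_value_Icc' hab hf ⟨hb, ha⟩
    · exact intermediate_value_Icc hab hf ⟨ha, hb⟩
  exact h0 t ht hft

theorem linearIndepOn_of_finrank_span_eq_ncard {ι E : Type*} [Finite ι] [AddCommGroup E]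
    [Module ℝ E] {v : ι → E} {s : Set ι} (h : finrank ℝ (span ℝ (v '' s)) = s.ncard) :
    LinearIndepOn ℝ v s := by
  have := Fintype.ofFinite s
  rw [LinearIndepOn, linearIndependent_iff_card_eq_finrank_span, Set.finrank, ← image_eq_range, h,
    ← Nat.card_coe_set_eq, Nat.card_eq_fintype_card]

theorem Submodule.finrank_prod {R M N : Type*} [DivisionRing R] [AddCommGroup M] [AddCommGroup N]
    [Module R M] [Module R N] (p : Submodule R M) (q : Submodule R N) [FiniteDimensional R p]
    [FiniteDimensional R q] :
    finrank R (p.prod q) = finrank R p + finrank R q := by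
  let e : p.prod q ≃ₗ[R] p × q :=
    { toFun x := (⟨x.1.1, x.2.1⟩, ⟨x.1.2, x.2.2⟩)
      invFun y := ⟨(y.1, y.2), y.1.2, y.2.2⟩
      map_add' _ _ := rfl
      map_smul' _ _ := rfl
      left_inv _ := rfl
      right_inv _ := rfl }
  rw [e.finrank_eq, Module.finrank_prod]

namespace Matrix

section Columns

variable {ι : Type} [Fintype ι]

theorem mulVec_eq_sum_smul_col' (M : Matrix ι ι ℝ) (x : ι → ℝ) :
    M *ᵥ x = ∑ i, x i • M.col' i := by
  ext j
  simp [mulVec, dotProduct, col', Finset.sum_apply, mul_comm]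

theorem exists_mulVec_eq_of_mem_span_col' (M : Matrix ι ι ℝ) {s : Set ι} {v : ι → ℝ}
    (hv : v ∈ span ℝ (M.col' '' s)) : ∃ g : ι → ℝ, (∀ i ∉ s, g i = 0) ∧ M *ᵥ g = v := by
  obtain ⟨l, hl, rfl⟩ := Finsupp.mem_span_image_iff_linearCombination ℝ |>.mp hv
  refine ⟨l, fun i hi => Finsupp.notMem_support_iff.mp fun h => hi (hl h), ?_⟩
  rw [Finsupp.linearCombination_apply, Finsupp.sum_fintype _ _ (by simp), mulVec_eq_sum_smul_col']

theorem _root_.LinearIndepOn.indicator_eq_zero_of_mulVec {M : Matrix ι ι ℝ} {s : Set ι}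
    (h : LinearIndepOn ℝ M.col' s) {x : ι → ℝ} (hx : M *ᵥ s.indicator x = 0) :
    s.indicator x = 0 := by
  let l : ι →₀ ℝ := Finsupp.equivFunOnFinite.symm (s.indicator x)
  have hl : l ∈ Finsupp.supported ℝ ℝ s := fun i hi => by
    by_contra his
    exact (Finsupp.mem_support_iff.mp hi) (by simp [l, his])
  have hl0 := linearIndepOn_iff.mp h l hl (by
    rw [Finsupp.linearCombination_apply, Finsupp.sum_fintype _ _ (by simp), ← hx,
      mulVec_eq_sum_smul_col']
    rfl)
  ext i
  simpa [l] using DFunLike.congr_fun hl0 i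

end Columns

section BlockDiagonal

variable {ι : Type} [DecidableEq ι]

/-- A matrix commutes with `coordProj c` iff it is block diagonal for the splitting `ι = c ∪ cᶜ`. -/
noncomputable def coordProj (c : Set ι) : Matrix ι ι ℝ := diagonal (c.indicator 1)

theorem transpose_coordProj (c : Set ι) : (coordProj c)ᵀ = coordProj c := diagonal_transpose _

theorem coordProj_add_coordProj_compl (c : Set ι) : coordProj c + coordProj cᶜ = 1 := by
  rw [coordProj, coordProj, diagonal_add, ← diagonal_one]
  congr 1
  exact indicator_self_add_compl c (1 : ι → ℝ)

variable [Fintype ι]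

@[simp]
theorem coordProj_mulVec (c : Set ι) (x : ι → ℝ) : coordProj c *ᵥ x = c.indicator x := by
  ext i
  by_cases hi : i ∈ c <;> simp [coordProj, mulVec_diagonal, hi]

theorem _root_.Commute.coordProj_compl {c : Set ι} {G : Matrix ι ι ℝ}
    (h : Commute (coordProj c) G) : Commute (coordProj cᶜ) G := by
  rw [← sub_eq_of_eq_add' (coordProj_add_coordProj_compl c).symm]
  exact (Commute.one_left G).sub_left h

noncomputable def blockDiagPart (c : Set ι) (A : Matrix ι ι ℝ) : Matrix ι ι ℝ :=
  coordProj c * A * coordProj c + coordProj cᶜ * A * coordProj cᶜ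

theorem blockDiagPart_mul_of_commute {c : Set ι} (A : Matrix ι ι ℝ) {G : Matrix ι ι ℝ}
    (hG : Commute (coordProj c) G) : blockDiagPart c (A * G) = blockDiagPart c A * G := by
  simp only [blockDiagPart, add_mul, Matrix.mul_assoc, ← hG.coordProj_compl.eq, ← hG.eq]

theorem continuousOn_det_blockDiagPart (c : Set ι) {M N : ℝ → Matrix ι ι ℝ} {s : Set ℝ}
    (hM : ContinuousOn M s) (hN : ContinuousOn N s) :
    ContinuousOn (fun t => (blockDiagPart c ((M t)ᵀ * N t)).det) s := by
  have : Continuous fun p : Matrix ι ι ℝ × Matrix ι ι ℝ => (blockDiagPart c (p.1ᵀ * p.2)).det := by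
    unfold blockDiagPart
    fun_prop
  exact this.comp_continuousOn (f := fun t => (M t, N t)) (hM.prodMk hN)

theorem exists_eq_mul_commute_coordProj {M N : Matrix ι ι ℝ} {c : Set ι}
    (hc : span ℝ (N.col' '' c) ≤ span ℝ (M.col' '' c))
    (hcc : span ℝ (N.col' '' cᶜ) ≤ span ℝ (M.col' '' cᶜ)) :
    ∃ G : Matrix ι ι ℝ, Commute (coordProj c) G ∧ N = M * G := by
  have hcol : ∀ j, ∃ g : ι → ℝ, (∀ i, (i ∈ c ↔ j ∈ c) ∨ g i = 0) ∧ M *ᵥ g = N.col' j := by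
    intro j
    by_cases hj : j ∈ c
    · obtain ⟨g, hg, hMg⟩ := M.exists_mulVec_eq_of_mem_span_col' (hc (subset_span ⟨j, hj, rfl⟩))
      exact ⟨g, fun i => by by_cases hi : i ∈ c <;> simp [hi, hj, hg], hMg⟩
    · obtain ⟨g, hg, hMg⟩ := M.exists_mulVec_eq_of_mem_span_col' (hcc (subset_span ⟨j, hj, rfl⟩))
      exact ⟨g, fun i => by by_cases hi : i ∈ c <;> simp [hi, hj, hg], hMg⟩
  choose g hg hMg using hcol
  refine ⟨of fun i j => g j i, ?_, ?_⟩
  · ext i j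
    have hgji := hg j i
    by_cases hi : i ∈ c <;> by_cases hj : j ∈ c <;> simp_all [coordProj]
  · ext i j
    exact (congrFun (hMg j) i).symm

theorem dotProduct_mulVec_blockDiagPart_transpose_mul_self (c : Set ι) (M : Matrix ι ι ℝ)
    (x : ι → ℝ) :
    x ⬝ᵥ (blockDiagPart c (Mᵀ * M) *ᵥ x) =
      (M *ᵥ c.indicator x) ⬝ᵥ (M *ᵥ c.indicator x) +
        (M *ᵥ cᶜ.indicator x) ⬝ᵥ (M *ᵥ cᶜ.indicator x) := by
  have key (s : Set ι) : x ⬝ᵥ ((coordProj s * (Mᵀ * M) * coordProj s) *ᵥ x) =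
      (M *ᵥ s.indicator x) ⬝ᵥ (M *ᵥ s.indicator x) := by
    have hgram : coordProj s * (Mᵀ * M) * coordProj s = (M * coordProj s)ᵀ * (M * coordProj s) := by
      rw [transpose_mul, transpose_coordProj, Matrix.mul_assoc, Matrix.mul_assoc, Matrix.mul_assoc]
    rw [hgram, ← mulVec_mulVec, dotProduct_mulVec, vecMul_transpose, ← mulVec_mulVec,
      coordProj_mulVec]
  rw [blockDiagPart, add_mulVec, dotProduct_add, key, key]

theorem det_blockDiagPart_transpose_mul_self_ne_zero {c : Set ι} {M : Matrix ι ι ℝ}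
    (hc : LinearIndepOn ℝ M.col' c) (hcc : LinearIndepOn ℝ M.col' cᶜ) :
    (blockDiagPart c (Mᵀ * M)).det ≠ 0 := by
  intro h
  obtain ⟨x, hx0, hx⟩ := exists_mulVec_eq_zero_iff.mpr h
  have hsum := dotProduct_mulVec_blockDiagPart_transpose_mul_self c M x
  rw [hx, dotProduct_zero] at hsum
  have hnonneg (v : ι → ℝ) : 0 ≤ v ⬝ᵥ v := Finset.sum_nonneg fun i _ => mul_self_nonneg (v i)
  obtain ⟨hc0, hcc0⟩ := (add_eq_zero_iff_of_nonneg (hnonneg _) (hnonneg _)).mp hsum.symm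
  rw [dotProduct_self_eq_zero] at hc0 hcc0
  apply hx0
  rw [← indicator_self_add_compl c x, hc.indicator_eq_zero_of_mulVec hc0,
    hcc.indicator_eq_zero_of_mulVec hcc0, add_zero]

theorem det_ne_zero_of_eq_mul_of_commute {c : Set ι} {M N G : Matrix ι ι ℝ} (hNMG : N = M * G)
    (hG : Commute (coordProj c) G) (hc : LinearIndepOn ℝ N.col' c)
    (hcc : LinearIndepOn ℝ N.col' cᶜ) : G.det ≠ 0 := by
  intro h
  obtain ⟨x, hx0, hx⟩ := exists_mulVec_eq_zero_iff.mpr h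
  have hN (s : Set ι) (hs : Commute (coordProj s) G) : N *ᵥ s.indicator x = 0 := by
    rw [← coordProj_mulVec, hNMG, ← mulVec_mulVec, mulVec_mulVec x G, ← hs.eq, ← mulVec_mulVec, hx,
      mulVec_zero, mulVec_zero]
  apply hx0
  rw [← indicator_self_add_compl c x, hc.indicator_eq_zero_of_mulVec (hN c hG),
    hcc.indicator_eq_zero_of_mulVec (hN cᶜ hG.coordProj_compl), add_zero]

theorem det_mul_det_blockDiagPart_eq {c : Set ι} {M N : Matrix ι ι ℝ}
    (hc : span ℝ (N.col' '' c) ≤ span ℝ (M.col' '' c))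
    (hcc : span ℝ (N.col' '' cᶜ) ≤ span ℝ (M.col' '' cᶜ)) :
    N.det * (blockDiagPart c (Mᵀ * M)).det = M.det * (blockDiagPart c (Mᵀ * N)).det := by
  obtain ⟨G, hG, rfl⟩ := exists_eq_mul_commute_coordProj hc hcc
  rw [← Matrix.mul_assoc, blockDiagPart_mul_of_commute _ hG, det_mul, det_mul]
  ring

theorem det_blockDiagPart_transpose_mul_ne_zero {c : Set ι} {M N : Matrix ι ι ℝ}
    (hc : span ℝ (N.col' '' c) ≤ span ℝ (M.col' '' c))
    (hcc : span ℝ (N.col' '' cᶜ) ≤ span ℝ (M.col' '' cᶜ))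
    (hMc : LinearIndepOn ℝ M.col' c) (hMcc : LinearIndepOn ℝ M.col' cᶜ)
    (hNc : LinearIndepOn ℝ N.col' c) (hNcc : LinearIndepOn ℝ N.col' cᶜ) :
    (blockDiagPart c (Mᵀ * N)).det ≠ 0 := by
  obtain ⟨G, hG, hNMG⟩ := exists_eq_mul_commute_coordProj hc hcc
  rw [hNMG, ← Matrix.mul_assoc, blockDiagPart_mul_of_commute _ hG, det_mul]
  exact mul_ne_zero (det_blockDiagPart_transpose_mul_self_ne_zero hMc hMcc)
    (det_ne_zero_of_eq_mul_of_commute hNMG hG hNc hNcc)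

end BlockDiagonal

end Matrix

open Matrix

namespace IsFramePath

variable {ι : Type} [Fintype ι] [DecidableEq ι] {c : Set ι} {V W : ℝ → Submodule ℝ (ι → ℝ)}
  {M N : ℝ → Matrix ι ι ℝ} {s : Set ℝ}

theorem det_ne_zero (hM : IsFramePath c V W M s) {t : ℝ} (ht : t ∈ s) (hVW : V t ⊔ W t = ⊤) :
    (M t).det ≠ 0 := by
  have hspan : span ℝ (range (M t).col) = ⊤ := by
    rw [← image_univ, ← union_compl_self c, image_union, span_union, ← hVW, hM.2.1 t ht,
      hM.2.2 t ht]
    rfl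
  have hindep : LinearIndependent ℝ (M t).col :=
    linearIndependent_of_top_le_span_of_card_eq_finrank hspan.ge
      (Module.finrank_fintype_fun_eq_card ℝ).symm
  exact ((isUnit_iff_isUnit_det _).mp (linearIndependent_cols_iff_isUnit.mp hindep)).ne_zero

theorem linearIndepOn (hM : IsFramePath c V W M s) {t : ℝ} (ht : t ∈ s)
    (hV : finrank ℝ (V t) = c.ncard) (hW : finrank ℝ (W t) = cᶜ.ncard) :
    LinearIndepOn ℝ (M t).col' c ∧ LinearIndepOn ℝ (M t).col' cᶜ :=
  ⟨linearIndepOn_of_finrank_span_eq_ncard (hM.2.1 t ht ▸ hV),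
    linearIndepOn_of_finrank_span_eq_ncard (hM.2.2 t ht ▸ hW)⟩

theorem z2Index_eq {a b : ℝ} (hab : a ≤ b) (hM : IsFramePath c V W M (Icc a b))
    (hN : IsFramePath c V W N (Icc a b)) (hV : ∀ t ∈ Icc a b, finrank ℝ (V t) = c.ncard)
    (hW : ∀ t ∈ Icc a b, finrank ℝ (W t) = cᶜ.ncard) :
    z2Index (M a) (M b) = z2Index (N a) (N b) := by
  have hspan : ∀ t ∈ Icc a b, span ℝ ((N t).col' '' c) = span ℝ ((M t).col' '' c) ∧
      span ℝ ((N t).col' '' cᶜ) = span ℝ ((M t).col' '' cᶜ) := fun t ht =>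
    ⟨(hN.2.1 t ht).symm.trans (hM.2.1 t ht), (hN.2.2 t ht).symm.trans (hM.2.2 t ht)⟩
  have hindep (P : ℝ → Matrix ι ι ℝ) (hP : IsFramePath c V W P (Icc a b)) (t) (ht : t ∈ Icc a b) :=
    hP.linearIndepOn ht (hV t ht) (hW t ht)
  have hψ : 0 < (blockDiagPart c ((M a)ᵀ * M a)).det * (blockDiagPart c ((M b)ᵀ * M b)).det :=
    mul_pos_of_continuousOn_of_ne_zero hab (continuousOn_det_blockDiagPart c hM.1 hM.1)
      fun t ht => det_blockDiagPart_transpose_mul_self_ne_zero (hindep M hM t ht).1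
        (hindep M hM t ht).2
  have hφ : 0 < (blockDiagPart c ((M a)ᵀ * N a)).det * (blockDiagPart c ((M b)ᵀ * N b)).det :=
    mul_pos_of_continuousOn_of_ne_zero hab (continuousOn_det_blockDiagPart c hM.1 hN.1)
      fun t ht => det_blockDiagPart_transpose_mul_ne_zero (hspan t ht).1.le (hspan t ht).2.le
        (hindep M hM t ht).1 (hindep M hM t ht).2 (hindep N hN t ht).1 (hindep N hN t ht).2
  have hdet (t) (ht : t ∈ Icc a b) :=
    det_mul_det_blockDiagPart_eq (hspan t ht).1.le (hspan t ht).2.le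
  have hprod : (M a).det * (M b).det *
      ((blockDiagPart c ((M a)ᵀ * N a)).det * (blockDiagPart c ((M b)ᵀ * N b)).det) =
      (N a).det * (N b).det *
      ((blockDiagPart c ((M a)ᵀ * M a)).det * (blockDiagPart c ((M b)ᵀ * M b)).det) := by
    linear_combination (-(M a).det * (blockDiagPart c ((M a)ᵀ * N a)).det) *
      hdet b (right_mem_Icc.mpr hab) -
      (N b).det * (blockDiagPart c ((M b)ᵀ * M b)).det * hdet a (left_mem_Icc.mpr hab)
  have hsign : 0 < (M a).det * (M b).det ↔ 0 < (N a).det * (N b).det := by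
    rw [← mul_pos_iff_of_pos_right hφ, hprod, mul_pos_iff_of_pos_right hψ]
  simp only [z2Index, hsign]

end IsFramePath

section DirectSum

variable {α β : Type}

theorem compl_inl_image_union_inr_image (c₁ : Set α) (c₂ : Set β) :
    (Sum.inl '' c₁ ∪ Sum.inr '' c₂)ᶜ = Sum.inl '' c₁ᶜ ∪ Sum.inr '' c₂ᶜ := by
  ext (x | x) <;> simp

theorem Matrix.fromBlocks_col'_image (A : Matrix α α ℝ) (B : Matrix β β ℝ) (c₁ : Set α)
    (c₂ : Set β) :
    (fromBlocks A 0 0 B).col' '' (Sum.inl '' c₁ ∪ Sum.inr '' c₂) =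
      (LinearEquiv.sumArrowLequivProdArrow α β ℝ ℝ).symm ''
        (LinearMap.inl ℝ _ _ '' (A.col' '' c₁) ∪ LinearMap.inr ℝ _ _ '' (B.col' '' c₂)) := by
  simp only [image_union, image_image]
  congr 1 <;> refine image_congr fun i _ => ?_ <;> ext (j | j) <;> rfl

theorem Matrix.span_fromBlocks_col'_image (A : Matrix α α ℝ) (B : Matrix β β ℝ) (c₁ : Set α)
    (c₂ : Set β) :
    span ℝ ((fromBlocks A 0 0 B).col' '' (Sum.inl '' c₁ ∪ Sum.inr '' c₂)) =
      comap (LinearEquiv.sumArrowLequivProdArrow α β ℝ ℝ).toLinearMap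
        ((span ℝ (A.col' '' c₁)).prod (span ℝ (B.col' '' c₂))) := by
  rw [fromBlocks_col'_image, ← LinearEquiv.coe_toLinearMap, ← map_span,
    LinearMap.span_inl_union_inr, comap_equiv_eq_map_symm]

variable [Fintype α] [Fintype β]

theorem ncard_inl_image_union_inr_image (c₁ : Set α) (c₂ : Set β) :
    (Sum.inl '' c₁ ∪ Sum.inr '' c₂).ncard = c₁.ncard + c₂.ncard := by
  rw [ncard_union_eq disjoint_image_inl_image_inr, ncard_image_of_injective _ Sum.inl_injective,
    ncard_image_of_injective _ Sum.inr_injective]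

theorem finrank_comap_sumArrowLequivProdArrow_prod {p : Submodule ℝ (α → ℝ)}
    {q : Submodule ℝ (β → ℝ)} {c₁ : Set α} {c₂ : Set β} (hp : finrank ℝ p = c₁.ncard)
    (hq : finrank ℝ q = c₂.ncard) :
    finrank ℝ (comap (LinearEquiv.sumArrowLequivProdArrow α β ℝ ℝ).toLinearMap (p.prod q)) =
      (Sum.inl '' c₁ ∪ Sum.inr '' c₂).ncard := by
  rw [comap_equiv_eq_map_symm, LinearEquiv.finrank_map_eq, Submodule.finrank_prod, hp, hq,
    ncard_inl_image_union_inr_image]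

variable [DecidableEq α] [DecidableEq β]

theorem IsFramePath.fromBlocks {c₁ : Set α} {c₂ : Set β} {V₁ W₁ : ℝ → Submodule ℝ (α → ℝ)}
    {V₂ W₂ : ℝ → Submodule ℝ (β → ℝ)} {M₁ : ℝ → Matrix α α ℝ} {M₂ : ℝ → Matrix β β ℝ}
    {s : Set ℝ} (h₁ : IsFramePath c₁ V₁ W₁ M₁ s) (h₂ : IsFramePath c₂ V₂ W₂ M₂ s) :
    IsFramePath (Sum.inl '' c₁ ∪ Sum.inr '' c₂)
      (fun t => comap (LinearEquiv.sumArrowLequivProdArrow α β ℝ ℝ).toLinearMap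
        ((V₁ t).prod (V₂ t)))
      (fun t => comap (LinearEquiv.sumArrowLequivProdArrow α β ℝ ℝ).toLinearMap
        ((W₁ t).prod (W₂ t)))
      (fun t => fromBlocks (M₁ t) 0 0 (M₂ t)) s := by
  refine ⟨?_, fun t ht => ?_, fun t ht => ?_⟩
  · exact (continuous_fst.matrix_fromBlocks continuous_const continuous_const
      continuous_snd).comp_continuousOn (f := fun t => (M₁ t, M₂ t)) (h₁.1.prodMk h₂.1)
  · rw [span_fromBlocks_col'_image, ← h₁.2.1 t ht, ← h₂.2.1 t ht]
  · rw [compl_inl_image_union_inr_image, span_fromBlocks_col'_image, ← h₁.2.2 t ht,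
      ← h₂.2.2 t ht]

theorem z2Index_fromBlocks {A A' : Matrix α α ℝ} {B B' : Matrix β β ℝ}
    (hA : A.det * A'.det ≠ 0) (hB : B.det * B'.det ≠ 0) :
    z2Index (fromBlocks A 0 0 B) (fromBlocks A' 0 0 B') = z2Index A A' + z2Index B B' := by
  have hdet : (fromBlocks A 0 0 B).det * (fromBlocks A' 0 0 B').det =
      A.det * A'.det * (B.det * B'.det) := by
    rw [det_fromBlocks_zero₂₁, det_fromBlocks_zero₂₁]
    ring
  rw [z2Index, z2Index, z2Index, hdet]
  rcases hA.lt_or_gt with hA | hA <;> rcases hB.lt_or_gt with hB | hB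
  · simp [mul_pos_of_neg_of_neg hA hB, hA.not_gt, hB.not_gt]
    decide
  · simp [(mul_neg_of_neg_of_pos hA hB).not_gt, hA.not_gt, hB]
  · simp [(mul_neg_of_pos_of_neg hA hB).not_gt, hA, hB.not_gt]
  · simp [mul_pos hA hB, hA, hB]

end DirectSum

theorem ncard_setOf_fin_val_lt (n k : ℕ) : {i : Fin n | (i : ℕ) < k}.ncard = min n k := by
  rw [ncard_eq_toFinset_card', toFinset_ofPred, Fin.card_filter_val_lt]

theorem ncard_compl_setOf_fin_val_lt (n k : ℕ) : {i : Fin n | (i : ℕ) < k}ᶜ.ncard = n - k := by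
  have := ncard_add_ncard_compl {i : Fin n | (i : ℕ) < k}
  rw [ncard_setOf_fin_val_lt, Nat.card_eq_fintype_card, Fintype.card_fin] at this
  omega

theorem finrank_eq_ncard_setOf_fin_val_lt {n k : ℕ} {V W : Submodule ℝ (Fin n → ℝ)}
    (h : finrank ℝ V = k ∧ finrank ℝ W = n - k) :
    finrank ℝ V = {i : Fin n | (i : ℕ) < k}.ncard ∧
      finrank ℝ W = {i : Fin n | (i : ℕ) < k}ᶜ.ncard := by
  have hkn : k ≤ n := h.1 ▸ (Submodule.finrank_le V).trans_eq (Module.finrank_fin_fun ℝ)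
  rw [ncard_setOf_fin_val_lt, ncard_compl_setOf_fin_val_lt, min_eq_right hkn]
  exact h
/-- sum additivity of the ℤ₂-index:
`ι(V₁⊕V₂, W₁⊕W₂;[a,b]) ≡ ι(V₁,W₁;[a,b]) + ι(V₂,W₂;[a,b]) (mod 2)`. -/
theorem z2Index_sum_additivity
    (n₁ n₂ k₁ k₂ : ℕ) (a b : ℝ) (hab : a ≤ b)
    (V₁ W₁ : ℝ → Submodule ℝ (Fin n₁ → ℝ)) (V₂ W₂ : ℝ → Submodule ℝ (Fin n₂ → ℝ))
    (M₁ : ℝ → Matrix (Fin n₁) (Fin n₁) ℝ) (M₂ : ℝ → Matrix (Fin n₂) (Fin n₂) ℝ)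
    (hM₁ : IsFramePath {i : Fin n₁ | (i : ℕ) < k₁} V₁ W₁ M₁ (Set.Icc a b))
    (hM₂ : IsFramePath {i : Fin n₂ | (i : ℕ) < k₂} V₂ W₂ M₂ (Set.Icc a b))
    (hk₁ : ∀ t ∈ Set.Icc a b, Module.finrank ℝ (V₁ t) = k₁ ∧ Module.finrank ℝ (W₁ t) = n₁ - k₁)
    (hk₂ : ∀ t ∈ Set.Icc a b, Module.finrank ℝ (V₂ t) = k₂ ∧ Module.finrank ℝ (W₂ t) = n₂ - k₂)
    (hta₁ : V₁ a ⊔ W₁ a = ⊤) (htb₁ : V₁ b ⊔ W₁ b = ⊤)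
    (hta₂ : V₂ a ⊔ W₂ a = ⊤) (htb₂ : V₂ b ⊔ W₂ b = ⊤)
    -- the direct-sum paths `V₁ ⊕ V₂` and `W₁ ⊕ W₂` inside `ℝ^{n₁} × ℝ^{n₂}`,
    -- realized on `Fin n₁ ⊕ Fin n₂ → ℝ` via the canonical linear equivalence:
    (Ms : ℝ → Matrix (Fin n₁ ⊕ Fin n₂) (Fin n₁ ⊕ Fin n₂) ℝ)
    (hMs : IsFramePath
      ((Sum.inl '' {i : Fin n₁ | (i : ℕ) < k₁}) ∪ (Sum.inr '' {i : Fin n₂ | (i : ℕ) < k₂}))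
      (fun t => Submodule.comap
        (LinearEquiv.sumArrowLequivProdArrow (Fin n₁) (Fin n₂) ℝ ℝ).toLinearMap
        ((V₁ t).prod (V₂ t)))
      (fun t => Submodule.comap
        (LinearEquiv.sumArrowLequivProdArrow (Fin n₁) (Fin n₂) ℝ ℝ).toLinearMap
        ((W₁ t).prod (W₂ t)))
      Ms (Set.Icc a b)) :
    z2Index (Ms a) (Ms b) = z2Index (M₁ a) (M₁ b) + z2Index (M₂ a) (M₂ b) := by
  have ha : a ∈ Icc a b := left_mem_Icc.mpr hab
  have hb : b ∈ Icc a b := right_mem_Icc.mpr hab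
  have hr₁ t (ht : t ∈ Icc a b) := finrank_eq_ncard_setOf_fin_val_lt (hk₁ t ht)
  have hr₂ t (ht : t ∈ Icc a b) := finrank_eq_ncard_setOf_fin_val_lt (hk₂ t ht)
  calc z2Index (Ms a) (Ms b)
      = z2Index (fromBlocks (M₁ a) 0 0 (M₂ a)) (fromBlocks (M₁ b) 0 0 (M₂ b)) :=
        hMs.z2Index_eq hab (hM₁.fromBlocks hM₂)
          (fun t ht => finrank_comap_sumArrowLequivProdArrow_prod (hr₁ t ht).1 (hr₂ t ht).1)
          (fun t ht => by
            rw [compl_inl_image_union_inr_image]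
            exact finrank_comap_sumArrowLequivProdArrow_prod (hr₁ t ht).2 (hr₂ t ht).2)
    _ = z2Index (M₁ a) (M₁ b) + z2Index (M₂ a) (M₂ b) :=
        z2Index_fromBlocks (mul_ne_zero (hM₁.det_ne_zero ha hta₁) (hM₁.det_ne_zero hb htb₁))
          (mul_ne_zero (hM₂.det_ne_zero ha hta₂) (hM₂.det_ne_zero hb htb₂))
end

section
/- Given continuous paths V:[0,1]→Gr_k(ℝⁿ) and W:[0,1]→Gr_{n−k}(ℝⁿ) with V(0)+W(0)=ℝⁿ and V(1)+W(1)=ℝⁿ, and defining W̃:[0,2]→Gr_{n−k}(ℝⁿ) by W̃(t)=W(t) for t∈[0,1] and W̃(t)=W(2−t) for t∈[1,2], there exists a continuous path Ṽ:[0,2]→Gr_k(ℝⁿ) such that (1) Ṽ restricted to [0,1] equals V, (2) Ṽ(0)=Ṽ(2), and (3) Ṽ(t)+W̃(t)=ℝⁿ for every t∈[1,2]. -/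
open Module

/-- The orthogonal projection of `ℝⁿ` onto a subspace `V`, as an endomorphism. -/
noncomputable def gapProj {n : ℕ} (V : Submodule ℝ (EuclideanSpace ℝ (Fin n))) :
    EuclideanSpace ℝ (Fin n) →L[ℝ] EuclideanSpace ℝ (Fin n) :=
  V.subtypeL.comp (Submodule.orthogonalProjectionOnto V)

/-- A path of subspaces is continuous (for the gap-metric topology of the
Grassmannian) iff the corresponding path of orthogonal projections is continuous. -/
def GapContinuousOn {n : ℕ} (V : ℝ → Submodule ℝ (EuclideanSpace ℝ (Fin n)))
    (s : Set ℝ) : Prop :=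
  ContinuousOn (fun t => gapProj (V t)) s

/-!
On `[1, 2]` the closing path is a path of complements of `W (2 - t)` running from `V 1` back to
`V 0`. A complement of a subspace `K` is encoded by an idempotent with kernel `K`: for any
operator `B`, `(1 - p) + p B (1 - p)`, with `p` the orthogonal projection onto `K`, is such an
idempotent, and it is `B` itself when `B` already is one. Applying this correction along
`W (2 - t)` to the linear interpolation between the projections onto `V 1` along `W 1` and onto
`V 0` along `W 0` gives a continuous path of idempotents with the right endpoints. Their ranges
move continuously in the gap topology, because the orthogonal projection onto the range of an
idempotent `e` is `e (e + e* - 1)⁻¹` (Kato), a continuous function of `e`.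
-/

section IdempotentAlong

variable {R : Type*} [Ring R] {p : R}

def idempotentAlong (p B : R) : R := (1 - p) + p * B * (1 - p)

variable (hp : IsIdempotentElem p) (B : R)
include hp

theorem one_sub_mul_idempotentAlong : (1 - p) * idempotentAlong p B = 1 - p := by
  rw [idempotentAlong, mul_add, hp.one_sub.eq, ← mul_assoc, ← mul_assoc, hp.one_sub_mul_self,
    zero_mul, zero_mul, add_zero]

theorem idempotentAlong_mul_eq_zero : idempotentAlong p B * p = 0 := by
  rw [idempotentAlong, add_mul, mul_assoc, hp.one_sub_mul_self, mul_zero, add_zero]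

theorem isIdempotentElem_idempotentAlong : IsIdempotentElem (idempotentAlong p B) := by
  rw [IsIdempotentElem]
  nth_rw 1 [idempotentAlong]
  rw [add_mul, mul_assoc (p * B), one_sub_mul_idempotentAlong hp]
  rfl

omit hp in
theorem idempotentAlong_eq_self (hBp : B * p = 0) (hB : (1 - p) * B = 1 - p) :
    idempotentAlong p B = B := by
  rw [idempotentAlong, mul_sub, mul_one, mul_assoc, hBp, mul_zero, sub_zero, ← hB, ← add_mul,
    sub_add_cancel, one_mul]

end IdempotentAlong

section StarRing

variable {R : Type*} [Ring R] [StarRing R] {e : R}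

theorem isStarProjection_mul_ringInverse (he : IsIdempotentElem e)
    (hu : IsUnit (e + star e - 1)) :
    IsStarProjection (e * Ring.inverse (e + star e - 1)) ∧
      e * Ring.inverse (e + star e - 1) * e = e := by
  obtain ⟨u, hu⟩ := hu
  rw [← hu, Ring.inverse_unit]
  -- `u = e + e* - 1` intertwines `e` and `e*`: `e u = u e* = e e*` and `e* u = u e = e* e`.
  have he' : star e * star e = star e := he.star.eq
  have hsa : IsSelfAdjoint (u : R) := by rw [hu, IsSelfAdjoint]; simp [add_comm]
  have h₁ : e * u = e * star e := by rw [hu]; noncomm_ring; rw [he.eq]; abel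
  have h₂ : (u : R) * star e = e * star e := by rw [hu]; noncomm_ring; rw [he']; abel
  have h₃ : star e * u = star e * e := by rw [hu]; noncomm_ring; rw [he']; abel
  have h₄ : (u : R) * e = star e * e := by rw [hu]; noncomm_ring; rw [he.eq]; abel
  have hinv : ((u⁻¹ : Rˣ) : R) * e = star e * u⁻¹ :=
    SemiconjBy.units_inv_symm_left (a := u) (x := star e) (y := e) (h₂.trans h₁.symm)
  have hinv' : ((u⁻¹ : Rˣ) : R) * star e = e * u⁻¹ :=
    SemiconjBy.units_inv_symm_left (a := u) (x := e) (y := star e) (h₄.trans h₃.symm)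
  have hsa' : star ((u⁻¹ : Rˣ) : R) = u⁻¹ := by simpa using hsa.ringInverse.star_eq
  have hPe : e * ↑u⁻¹ * e = e := by
    rw [mul_assoc, hinv, ← mul_assoc, ← h₁, mul_assoc, Units.mul_inv, mul_one]
  refine ⟨⟨?_, ?_⟩, hPe⟩
  · rw [IsIdempotentElem, ← mul_assoc, hPe]
  · rw [IsSelfAdjoint, star_mul, hsa', hinv']

end StarRing

section Operator

variable {𝕜 E : Type*} [RCLike 𝕜] [NormedAddCommGroup E] [InnerProductSpace 𝕜 E]

theorem ker_idempotentAlong_starProjection (K : Submodule 𝕜 E) [K.HasOrthogonalProjection]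
    (B : E →L[𝕜] E) : (idempotentAlong K.starProjection B).ker = K := by
  have hp := K.isIdempotentElem_starProjection
  ext x
  constructor
  · intro hx
    have h := DFunLike.congr_fun (one_sub_mul_idempotentAlong hp B) x
    have hx' : idempotentAlong K.starProjection B x = 0 := hx
    simp only [mul_apply_eq_comp, hx', sub_apply, one_apply_eq_self, map_zero] at h
    exact K.starProjection_eq_self_iff.mp (sub_eq_zero.mp h.symm).symm
  · intro hx
    rw [LinearMap.mem_ker, ← K.starProjection_eq_self_iff.mpr hx]
    exact DFunLike.congr_fun (idempotentAlong_mul_eq_zero hp B) x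

theorem idempotentAlong_starProjection_eq_self (K : Submodule 𝕜 E) [K.HasOrthogonalProjection]
    {B : E →L[𝕜] E} (hB : ∀ x ∈ K, B x = 0) (hB' : ∀ x, x - B x ∈ K) :
    idempotentAlong K.starProjection B = B := by
  refine idempotentAlong_eq_self B ?_ ?_
  · ext x
    exact hB _ (K.starProjection_apply_mem x)
  · ext x
    have h := K.starProjection_eq_self_iff.mpr (hB' x)
    rw [map_sub] at h
    simp only [mul_apply_eq_comp, sub_apply, one_apply_eq_self]
    rw [sub_eq_sub_iff_sub_eq_sub, ← neg_sub, ← h, neg_sub]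

theorem ContinuousLinearMap.star_apply_eq_zero_of_apply_star_apply [CompleteSpace E]
    {A : E →L[𝕜] E} {z : E} (h : A (star A z) = 0) : star A z = 0 := by
  simpa [star_eq_adjoint] using
    A.ker_self_comp_adjoint.le (x := z) (by simpa [star_eq_adjoint] using h)

variable [FiniteDimensional 𝕜 E]

theorem isCompl_range_idempotentAlong_starProjection (K : Submodule 𝕜 E) (B : E →L[𝕜] E) :
    IsCompl (idempotentAlong K.starProjection B).range K := by
  have h := isIdempotentElem_idempotentAlong K.isIdempotentElem_starProjection B
  simpa [ker_idempotentAlong_starProjection] using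
    (ContinuousLinearMap.IsIdempotentElem.isTopCompl h).isCompl

theorem range_idempotentAlong_starProjection_projection {U K : Submodule 𝕜 E}
    (h : IsCompl U K) :
    (idempotentAlong K.starProjection (LinearMap.toContinuousLinearMap (U.projection K h))).range
      = U := by
  rw [idempotentAlong_starProjection_eq_self K
    (fun x hx => (U.projection_apply_eq_zero_iff h).mpr hx) (U.sub_projection_mem h)]
  exact U.range_projection h

variable [CompleteSpace E]

theorem isUnit_add_star_sub_one {T : E →L[𝕜] E} (hT : IsIdempotentElem T) :
    IsUnit (T + star T - 1) := by
  set S := T + star T - 1 with hS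
  have hTS : T * S = T * star T := by
    rw [hS, mul_sub, mul_add, hT.eq, mul_one]; abel
  have hTS' : star T * S = star T * T := by
    rw [hS, mul_sub, mul_add, hT.star.eq, mul_one]; abel
  have hinj : Function.Injective S := by
    rw [injective_iff_map_eq_zero]
    intro z hz
    have h₁ : star T z = 0 := T.star_apply_eq_zero_of_apply_star_apply <| by
      simpa [hz] using (DFunLike.congr_fun hTS z).symm
    have h₂ : T z = 0 := by
      simpa using (star T).star_apply_eq_zero_of_apply_star_apply (z := z) <| by
        simpa [hz] using (DFunLike.congr_fun hTS' z).symm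
    simpa [hS, h₁, h₂] using hz
  exact ContinuousLinearMap.isUnit_iff_bijective.mpr
    ⟨hinj, LinearMap.injective_iff_surjective.mp hinj⟩

theorem starProjection_range_eq_mul_ringInverse {T : E →L[𝕜] E} (hT : IsIdempotentElem T) :
    T.range.starProjection = T * Ring.inverse (T + star T - 1) := by
  obtain ⟨hP, hPT⟩ := isStarProjection_mul_ringInverse hT (isUnit_add_star_sub_one hT)
  refine ContinuousLinearMap.IsStarProjection.ext isStarProjection_starProjection hP ?_
  rw [Submodule.range_starProjection]
  refine le_antisymm ?_ (LinearMap.range_comp_le_range _ _)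
  conv_lhs => rw [← hPT]
  exact LinearMap.range_comp_le_range _ _

theorem continuousOn_starProjection_range {X : Type*} [TopologicalSpace X]
    {T : X → E →L[𝕜] E} {s : Set X} (hT : ContinuousOn T s)
    (hidem : ∀ x ∈ s, IsIdempotentElem (T x)) :
    ContinuousOn (fun x => (T x).range.starProjection) s := by
  refine ContinuousOn.congr ?_ fun x hx => starProjection_range_eq_mul_ringInverse (hidem x hx)
  refine hT.mul fun x hx => ?_
  have hS : ContinuousWithinAt (fun x => T x + star (T x) - 1) s x :=
    ((hT x hx).add (hT x hx).star).sub continuousWithinAt_const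
  have hinv : ContinuousAt Ring.inverse (T x + star (T x) - 1) := by
    simpa using NormedRing.inverse_continuousAt (isUnit_add_star_sub_one (hidem x hx)).unit
  exact hinv.comp_continuousWithinAt (f := fun x => T x + star (T x) - 1) hS

theorem exists_continuousOn_starProjection_isCompl {K : ℝ → Submodule 𝕜 E}
    (hK : ContinuousOn (fun t => (K t).starProjection) (Set.Icc 0 1)) {U₀ U₁ : Submodule 𝕜 E}
    (h₀ : IsCompl U₀ (K 0)) (h₁ : IsCompl U₁ (K 1)) :
    ∃ U : ℝ → Submodule 𝕜 E, ContinuousOn (fun t => (U t).starProjection) (Set.Icc 0 1) ∧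
      U 0 = U₀ ∧ U 1 = U₁ ∧ ∀ t ∈ Set.Icc (0 : ℝ) 1, IsCompl (U t) (K t) := by
  set π₀ : E →L[𝕜] E := LinearMap.toContinuousLinearMap (U₀.projection (K 0) h₀)
  set π₁ : E →L[𝕜] E := LinearMap.toContinuousLinearMap (U₁.projection (K 1) h₁)
  set T : ℝ → E →L[𝕜] E := fun t =>
    idempotentAlong (K t).starProjection (((1 - t : ℝ) : 𝕜) • π₀ + (t : 𝕜) • π₁) with hT
  refine ⟨fun t => (T t).range, ?_, ?_, ?_,
    fun t _ => isCompl_range_idempotentAlong_starProjection _ _⟩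
  · refine continuousOn_starProjection_range ?_
      fun t _ => isIdempotentElem_idempotentAlong (K t).isIdempotentElem_starProjection _
    simp only [hT, idempotentAlong]
    fun_prop
  · simpa [T] using range_idempotentAlong_starProjection_projection h₀
  · simpa [T] using range_idempotentAlong_starProjection_projection h₁

end Operator

theorem ContinuousOn.if_le_Icc {α β : Type*} [LinearOrder α] [TopologicalSpace α]
    [OrderClosedTopology α] [TopologicalSpace β] {f g : α → β} {a b c : α} (hab : a ≤ b)
    (hbc : b ≤ c) (hf : ContinuousOn f (Set.Icc a b)) (hg : ContinuousOn g (Set.Icc b c))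
    (hfg : f b = g b) : ContinuousOn (fun t => if t ≤ b then f t else g t) (Set.Icc a c) := by
  rw [← Set.Icc_union_Icc_eq_Icc hab hbc]
  refine ContinuousOn.union_of_isClosed ?_ ?_ isClosed_Icc isClosed_Icc
  · exact hf.congr fun t ht => if_pos ht.2
  · refine hg.congr fun t ht => ?_
    rcases ht.1.eq_or_lt with rfl | hlt
    · simp [hfg]
    · simp [not_le.mpr hlt]

theorem Submodule.isCompl_of_sup_eq_top {K V : Type*} [DivisionRing K] [AddCommGroup V]
    [Module K V] [FiniteDimensional K V] {s t : Submodule K V} (hst : s ⊔ t = ⊤)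
    (hdim : finrank K s + finrank K t ≤ finrank K V) : IsCompl s t := by
  have h := Submodule.finrank_sup_add_finrank_inf_eq s t
  rw [hst, finrank_top] at h
  have hinf : s ⊓ t = ⊥ := Submodule.finrank_eq_zero.mp (by omega)
  exact ⟨disjoint_iff.mpr hinf, codisjoint_iff.mpr hst⟩

/-- given continuous paths `V : [0,1] → Gr_k(ℝⁿ)` and
`W : [0,1] → Gr_{n−k}(ℝⁿ)` with transversal endpoints, and the doubled path
`W̃(t) = W(t)` on `[0,1]`, `W̃(t) = W(2−t)` on `[1,2]`, there is a continuous closed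
path `Ṽ : [0,2] → Gr_k(ℝⁿ)` extending `V` which is transversal to `W̃` on `[1,2]`. -/
theorem exists_closed_extension_transversal
    (n k : ℕ)
    (V W : ℝ → Submodule ℝ (EuclideanSpace ℝ (Fin n)))
    (hV : GapContinuousOn V (Set.Icc 0 1)) (hW : GapContinuousOn W (Set.Icc 0 1))
    (hVk : ∀ t ∈ Set.Icc (0 : ℝ) 1, finrank ℝ (V t) = k)
    (hWk : ∀ t ∈ Set.Icc (0 : ℝ) 1, finrank ℝ (W t) = n - k)
    (h0 : V 0 ⊔ W 0 = ⊤) (h1 : V 1 ⊔ W 1 = ⊤) :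
    ∃ Vt : ℝ → Submodule ℝ (EuclideanSpace ℝ (Fin n)),
      GapContinuousOn Vt (Set.Icc 0 2) ∧
      (∀ t ∈ Set.Icc (0 : ℝ) 2, finrank ℝ (Vt t) = k) ∧
      (∀ t ∈ Set.Icc (0 : ℝ) 1, Vt t = V t) ∧
      Vt 0 = Vt 2 ∧
      (∀ t ∈ Set.Icc (1 : ℝ) 2, Vt t ⊔ W (2 - t) = ⊤) := by
  have hE : finrank ℝ (EuclideanSpace ℝ (Fin n)) = n := finrank_euclideanSpace_fin
  have hk : k ≤ n := hE ▸ hVk 0 (by norm_num) ▸ (V 0).finrank_le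
  have hcompl : ∀ t ∈ Set.Icc (0 : ℝ) 1, V t ⊔ W t = ⊤ → IsCompl (V t) (W t) := fun t ht h =>
    Submodule.isCompl_of_sup_eq_top h (by rw [hVk t ht, hWk t ht, hE]; omega)
  obtain ⟨U, hU, hU0, hU1, hUW⟩ := exists_continuousOn_starProjection_isCompl hW
    (hcompl 0 (by norm_num) h0) (hcompl 1 (by norm_num) h1)
  have hrev : Set.MapsTo (fun t : ℝ => 2 - t) (Set.Icc 1 2) (Set.Icc 0 1) := fun t ht =>
    ⟨by linarith [ht.2], by linarith [ht.1]⟩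
  set Vt : ℝ → Submodule ℝ (EuclideanSpace ℝ (Fin n)) := fun t => if t ≤ 1 then V t else U (2 - t)
  have hVt : ∀ t ∈ Set.Icc (1 : ℝ) 2, Vt t = U (2 - t) := by
    rintro t ⟨ht, -⟩
    rcases ht.eq_or_lt with rfl | hlt
    · norm_num [Vt, hU1]
    · simp [Vt, not_le.mpr hlt]
  refine ⟨Vt, ?_, fun t ht => ?_, fun t ht => if_pos ht.2, by simp [Vt, hU0], fun t ht => ?_⟩
  · refine (ContinuousOn.if_le_Icc zero_le_one one_le_two hV (hU.comp (by fun_prop) hrev)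
      (by norm_num [hU1]; rfl)).congr fun t _ => apply_ite gapProj _ _ _
  · rcases le_total t 1 with h | h
    · rw [show Vt t = V t from if_pos h]
      exact hVk t ⟨ht.1, h⟩
    · have hs : 2 - t ∈ Set.Icc (0 : ℝ) 1 := hrev ⟨h, ht.2⟩
      have hdim := Submodule.finrank_add_eq_of_isCompl (hUW _ hs)
      rw [hWk _ hs, hE] at hdim
      rw [hVt t ⟨h, ht.2⟩]
      omega
  · rw [hVt t ht]
    exact (hUW _ (hrev ht)).sup_eq_top
end
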